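/- Let φ'_0 = (x_1), ψ'_0 = (x_2), and inductively define φ'_{m+1} = [[φ'_m, x_{2m+1}·I], [x_{2m+2}·I, -ψ'_m]] and ψ'_{m+1} = [[ψ'_m, x_{2m+1}·I], [x_{2m+2}·I, -φ'_m]]. Then φ'_m · ψ'_m = (x_1 x_2 + x_3 x_4 + ... + x_{2m-1} x_{2m}) · I, i.e., (φ'_m, ψ'_m) is a matrix factorization of x_1 x_2 + ... + x_{2m-1} x_{2m}. -/

import Mathlib

open MvPolynomial Matrix

/-- Index type of size `2^m`. -/
def SpinIdx : ℕ → Type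
  | 0 => Unit
  | m + 1 => SpinIdx m ⊕ SpinIdx m

instance spinIdxFintype : (m : ℕ) → Fintype (SpinIdx m)
  | 0 => inferInstanceAs (Fintype Unit)
  | m + 1 => letI := spinIdxFintype m; inferInstanceAs (Fintype (SpinIdx m ⊕ SpinIdx m))

instance spinIdxDecEq : (m : ℕ) → DecidableEq (SpinIdx m)
  | 0 => inferInstanceAs (DecidableEq Unit)
  | m + 1 => letI := spinIdxDecEq m; inferInstanceAs (DecidableEq (SpinIdx m ⊕ SpinIdx m))

-- The matrices `φ'` and `ψ'` over `k[x_1, x_2, …]`.  Here `phiMat' k m` is the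
-- `2^m × 2^m` matrix `φ'_{m+1}` of the paper (so the base case is `φ'_1 = (x_1)`,
-- `ψ'_1 = (x_2)`), and the inductive step forms the block matrices
-- `φ'_{m+1} = [[φ'_m, x_{2m+1}·I], [x_{2m+2}·I, -ψ'_m]]` and
-- `ψ'_{m+1} = [[ψ'_m, x_{2m+1}·I], [x_{2m+2}·I, -φ'_m]]`.
mutual
  noncomputable def phiMat' (k : Type*) [CommRing k] :
      (m : ℕ) → Matrix (SpinIdx m) (SpinIdx m) (MvPolynomial ℕ k)
    | 0 => fun _ _ => X 1
    | m + 1 =>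
        Matrix.fromBlocks (phiMat' k m)
          ((X (2 * (m + 1) + 1) : MvPolynomial ℕ k) • (1 : Matrix (SpinIdx m) (SpinIdx m) (MvPolynomial ℕ k)))
          ((X (2 * (m + 1) + 2) : MvPolynomial ℕ k) • (1 : Matrix (SpinIdx m) (SpinIdx m) (MvPolynomial ℕ k)))
          (-(psiMat' k m))
  noncomputable def psiMat' (k : Type*) [CommRing k] :
      (m : ℕ) → Matrix (SpinIdx m) (SpinIdx m) (MvPolynomial ℕ k)
    | 0 => fun _ _ => X 2
    | m + 1 =>
        Matrix.fromBlocks (psiMat' k m)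
          ((X (2 * (m + 1) + 1) : MvPolynomial ℕ k) • (1 : Matrix (SpinIdx m) (SpinIdx m) (MvPolynomial ℕ k)))
          ((X (2 * (m + 1) + 2) : MvPolynomial ℕ k) • (1 : Matrix (SpinIdx m) (SpinIdx m) (MvPolynomial ℕ k)))
          (-(phiMat' k m))
end

theorem Matrix.fromBlocks_mul_fromBlocks_eq_smul_one {n R : Type*} [Fintype n] [DecidableEq n]
    [CommRing R] {A B : Matrix n n R} {c : R} (hAB : A * B = c • 1) (hBA : B * A = c • 1)
    (a b : R) :
    fromBlocks A (a • 1) (b • 1) (-B) * fromBlocks B (a • 1) (b • 1) (-A) =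
      (c + a * b) • (1 : Matrix (n ⊕ n) (n ⊕ n) R) := by
  rw [fromBlocks_multiply, ← fromBlocks_one, fromBlocks_smul]
  congr 1
  · rw [hAB, smul_mul_smul, one_mul, add_smul]
  · rw [Matrix.mul_smul, Matrix.smul_mul, mul_one, one_mul, smul_neg, add_neg_cancel, smul_zero]
  · rw [Matrix.mul_smul, Matrix.smul_mul, mul_one, one_mul, smul_neg, add_neg_cancel, smul_zero]
  · rw [smul_mul_smul, one_mul, neg_mul_neg, hBA, add_smul, add_comm, mul_comm b]

/-- The induction has to carry both products, since each step swaps the roles of `φ'` and `ψ'`. -/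
theorem phiMat'_mul_psiMat'_and_psiMat'_mul_phiMat' (k : Type*) [CommRing k] (m : ℕ) :
    phiMat' k m * psiMat' k m =
        (∑ i ∈ Finset.range (m + 1), X (2 * i + 1) * X (2 * i + 2) : MvPolynomial ℕ k) • 1 ∧
      psiMat' k m * phiMat' k m =
        (∑ i ∈ Finset.range (m + 1), X (2 * i + 1) * X (2 * i + 2) : MvPolynomial ℕ k) • 1 := by
  induction m with
  | zero =>
    constructor <;> ext i j : 1 <;> rw [mul_apply] <;>
      simp [phiMat', psiMat', Subsingleton.elim (α := Unit) i j, mul_comm,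
        show Fintype.card (SpinIdx 0) = 1 from rfl]
  | succ m ih =>
    rw [Finset.sum_range_succ]
    exact ⟨fromBlocks_mul_fromBlocks_eq_smul_one ih.1 ih.2 _ _,
      fromBlocks_mul_fromBlocks_eq_smul_one ih.2 ih.1 _ _⟩

/-- `(φ'_m, ψ'_m)` is a matrix factorization of `x_1 x_2 + x_3 x_4 + ⋯ + x_{2m-1} x_{2m}`:
with the indexing above, `phiMat' k m` (which is the `2^m × 2^m` matrix `φ'_{m+1}`)
multiplied with `psiMat' k m` gives `(x_1 x_2 + ⋯ + x_{2(m+1)-1} x_{2(m+1)}) · I`. -/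
theorem phiMat'_mul_psiMat' (k : Type*) [CommRing k] (m : ℕ) :
    phiMat' k m * psiMat' k m =
      ((∑ i ∈ Finset.range (m + 1), X (2 * i + 1) * X (2 * i + 2) : MvPolynomial ℕ k)) •
        (1 : Matrix (SpinIdx m) (SpinIdx m) (MvPolynomial ℕ k)) :=
  (phiMat'_mul_psiMat'_and_psiMat'_mul_phiMat' k m).1
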